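/- arXiv:0712.0331 — 5 statements merged into one kernel-verified Lean document; each statement's English description precedes it below -/
import Mathlib

section
/- Let r ≥ 1 and let n_1, ..., n_r be integers with 1 < n_1 | n_2 | ... | n_r, let G = C_{n_1} ⊕ ... ⊕ C_{n_r} and n = n_r. Then there exists a family (x_d)_{d | n} of natural numbers indexed by the positive divisors of n such that: for every divisor d of n and every divisor d' of d with d' > 1, x_d ≤ η(G_{υ(d',d)}) − 1; for every divisor d of n, Σ_{d' | d} x_{d'} ≤ D(G_{υ(d,d)}) − 1; and k(G) ≤ Σ_{d | n} x_d/d. In particular, k(G) is at most the maximum of Σ_{d | n} x_d/d over all families of natural numbers satisfying these constraints. -/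
open scoped BigOperators

attribute [local instance] Classical.propDecidable

/-- A sequence (multiset) over `G` is zero-sumfree if no nonempty sub-multiset sums to `0`. -/
def IsZeroSumFree {G : Type*} [AddCommGroup G] (S : Multiset G) : Prop :=
  ∀ T : Multiset G, T ≤ S → T ≠ 0 → T.sum ≠ 0

/-- A minimal zero-sum sequence: sum `0`, and no nonempty proper sub-multiset sums to `0`. -/
def IsMinimalZeroSum {G : Type*} [AddCommGroup G] (S : Multiset G) : Prop :=
  S.sum = 0 ∧ ∀ T : Multiset G, T < S → T ≠ 0 → T.sum ≠ 0

/-- The cross number of a sequence: `k(S) = Σ_{g ∈ S} 1/ord(g)`. -/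
noncomputable def crossNumber {G : Type*} [AddCommGroup G] (S : Multiset G) : ℝ :=
  (S.map fun g => (1 : ℝ) / (addOrderOf g)).sum

/-- The little cross number `k(G)`: max of `k(S)` over zero-sumfree sequences `S` over `G`. -/
noncomputable def littleCrossNumber (G : Type*) [AddCommGroup G] : ℝ :=
  sSup {x : ℝ | ∃ S : Multiset G, IsZeroSumFree S ∧ crossNumber S = x}

/-- The cross number `K(G)`: max of `k(S)` over minimal zero-sum sequences `S` over `G`. -/
noncomputable def bigCrossNumber (G : Type*) [AddCommGroup G] : ℝ :=
  sSup {x : ℝ | ∃ S : Multiset G, IsMinimalZeroSum S ∧ crossNumber S = x}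

/-- The Davenport constant `D(G)`. -/
noncomputable def davenport (G : Type*) [AddCommGroup G] : ℕ :=
  sInf {t | 1 ≤ t ∧ ∀ S : Multiset G, t ≤ Multiset.card S →
    ∃ T, T ≤ S ∧ T ≠ 0 ∧ T.sum = 0}

/-- The constant `η(G)`. -/
noncomputable def etaConst (G : Type*) [AddCommGroup G] : ℕ :=
  sInf {t | 1 ≤ t ∧ ∀ S : Multiset G, t ≤ Multiset.card S →
    ∃ T, T ≤ S ∧ T ≠ 0 ∧ Multiset.card T ≤ AddMonoid.exponent G ∧ T.sum = 0}

/-- `υ_i(d',d) = A_i / gcd(A_i, B_i)` where `A_i = gcd(d', n_i)` and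
`B_i = lcm(d, n_i)/lcm(d', n_i)`. -/
def upsilon (ni d' d : ℕ) : ℕ :=
  Nat.gcd d' ni / Nat.gcd (Nat.gcd d' ni) (Nat.lcm d ni / Nat.lcm d' ni)

/-- `k*` of `C_{n_1} ⊕ ... ⊕ C_{n_r}`, computed from the primary decomposition. -/
noncomputable def kStarTuple {r : ℕ} (n : Fin r → ℕ) : ℝ :=
  ∑ i, ∑ p ∈ (n i).primeFactors,
    ((p ^ ((n i).factorization p) : ℝ) - 1) / (p ^ ((n i).factorization p))

/-- `α(n) = Σ_{d | n} (P⁻(d) − 1)/d`. -/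
noncomputable def alphaFn (n : ℕ) : ℝ :=
  ∑ d ∈ n.divisors, ((d.minFac : ℝ) - 1) / d

/-- `β(n) = Σ_{p | n prime} (p − 1)/p`. -/
noncomputable def betaFn (n : ℕ) : ℝ :=
  ∑ p ∈ n.primeFactors, ((p : ℝ) - 1) / p

/-!
Take a zero-sumfree sequence `S` over `G` of maximal cross number `k(G)`, and among those one of
minimal length; let `x d` be the number of its terms of order `d`, so that `k(G) = ∑ x d / d`.
No block `T ⊆ S` of at least two terms has `k(T) ≤ 1 / ord(σ T)`: replacing `T` by its sum
`σ T` would give a shorter maximizer.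

The terms of order dividing `d` lie in the `d`-torsion of `G`, a copy of `G_{υ(d,d)}`, so there
are fewer than `D(G_{υ(d,d)})` of them. Multiplying the terms of order `d` by `d / d'` maps them
into a copy of `G_{υ(d',d)}`; if there were `η(G_{υ(d',d)})` of them, some block `T` of at most
`d'` of them would satisfy `(d / d') • σ T = 0`, whence `k(T) = |T| / d ≤ 1 / ord(σ T)`;
`|T| = 1` is excluded by `d' > 1`.
-/

namespace Multiset

variable {α β : Type*}

theorem exists_map_eq_of_forall_mem_range {f : α → β} {s : Multiset β}
    (hs : ∀ b ∈ s, b ∈ Set.range f) : ∃ t : Multiset α, t.map f = s := by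
  choose g hg using hs
  exact ⟨s.attach.map fun b => g b.1 b.2, by simp [Multiset.map_map, hg]⟩

theorem exists_le_map_eq_of_le_map [DecidableEq β] {f : α → β} {t : Multiset β}
    {s : Multiset α} (h : t ≤ s.map f) : ∃ u ≤ s, u.map f = t := by
  induction s using Multiset.induction generalizing t with
  | empty => exact ⟨0, le_rfl, (by simpa using h : t = 0).symm⟩
  | cons a s ih =>
    rw [map_cons] at h
    by_cases ha : f a ∈ t
    · obtain ⟨u, hus, hu⟩ := ih (erase_le_iff_le_cons.mpr h)
      exact ⟨a ::ₘ u, cons_le_cons a hus, by rw [map_cons, hu, cons_erase ha]⟩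
    · obtain ⟨u, hus, hu⟩ := ih ((le_cons_of_notMem ha).mp h)
      exact ⟨u, hus.trans (le_cons_self s a), hu⟩

end Multiset

section ZeroSum

variable {G H : Type*} [AddCommGroup G] [AddCommGroup H]

theorem IsZeroSumFree.mono {S T : Multiset G} (hS : IsZeroSumFree S) (hTS : T ≤ S) :
    IsZeroSumFree T :=
  fun U hU => hS U (hU.trans hTS)

theorem IsZeroSumFree.of_map (φ : H →+ G) {S : Multiset H} (hS : IsZeroSumFree (S.map φ)) :
    IsZeroSumFree S := fun T hTS hT hsum =>
  hS (T.map φ) (Multiset.map_le_map hTS) (by simpa using hT)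
    (by rw [← map_multiset_sum, hsum, map_zero])

theorem IsZeroSumFree.cons_sum_sub {S T : Multiset G} (hS : IsZeroSumFree S) (hTS : T ≤ S)
    (hT : T ≠ 0) : IsZeroSumFree (T.sum ::ₘ (S - T)) := by
  intro U hU hU0 hsum
  by_cases hyU : T.sum ∈ U
  · -- trade the new element back for the block `T` it replaced
    have hle : U.erase T.sum + T ≤ S :=
      (add_le_add (Multiset.erase_le_iff_le_cons.mpr hU) le_rfl).trans_eq
        (tsub_add_cancel_of_le hTS)
    refine hS _ hle (by simp [hT]) ?_
    rw [Multiset.sum_add, add_comm, ← Multiset.sum_cons, Multiset.cons_erase hyU, hsum]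
  · exact hS U (((Multiset.le_cons_of_notMem hyU).mp hU).trans tsub_le_self) hU0 hsum

theorem exists_short_zero_sum [Finite G] {S : Multiset G}
    (hS : Nat.card G * (AddMonoid.exponent G - 1) < Multiset.card S) :
    ∃ T ≤ S, T ≠ 0 ∧ Multiset.card T ≤ AddMonoid.exponent G ∧ T.sum = 0 := by
  have := Fintype.ofFinite G
  obtain ⟨g, hg⟩ : ∃ g, AddMonoid.exponent G ≤ S.count g := by
    by_contra! h
    have : Multiset.card S ≤ Nat.card G * (AddMonoid.exponent G - 1) := by
      rw [← Multiset.sum_count_eq_card (s := Finset.univ) (by simp), Nat.card_eq_fintype_card,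
        ← smul_eq_mul, ← Finset.card_univ, ← Finset.sum_const]
      exact Finset.sum_le_sum fun g _ => Nat.le_sub_one_of_lt (h g)
    omega
  have hord : addOrderOf g ≤ AddMonoid.exponent G :=
    Nat.le_of_dvd (Nat.pos_of_ne_zero AddMonoid.exponent_ne_zero_of_finite)
      (AddMonoid.addOrder_dvd_exponent g)
  refine ⟨Multiset.replicate (addOrderOf g) g,
    Multiset.le_count_iff_replicate_le.mp (hord.trans hg), ?_, by simpa using hord, by simp⟩
  rw [Ne, ← Multiset.card_eq_zero, Multiset.card_replicate]
  exact (addOrderOf_pos g).ne'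

theorem exists_short_zero_sum_of_etaConst_le [Finite G] {S : Multiset G}
    (hS : etaConst G ≤ Multiset.card S) :
    ∃ T ≤ S, T ≠ 0 ∧ Multiset.card T ≤ AddMonoid.exponent G ∧ T.sum = 0 :=
  (Nat.sInf_mem (s := {t | 1 ≤ t ∧ ∀ S : Multiset G, t ≤ Multiset.card S →
      ∃ T ≤ S, T ≠ 0 ∧ Multiset.card T ≤ AddMonoid.exponent G ∧ T.sum = 0})
    ⟨_, le_add_self, fun _ hS => exists_short_zero_sum (Nat.lt_of_succ_le hS)⟩).2 S hS

theorem IsZeroSumFree.card_lt_davenport [Finite G] {S : Multiset G} (hS : IsZeroSumFree S) :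
    Multiset.card S < davenport G := by
  by_contra! h
  obtain ⟨T, hTS, hT, hsum⟩ := (Nat.sInf_mem (s := {t | 1 ≤ t ∧ ∀ S : Multiset G,
      t ≤ Multiset.card S → ∃ T ≤ S, T ≠ 0 ∧ T.sum = 0})
    ⟨_, le_add_self, fun _ hS => by
      obtain ⟨T, hTS, hT, -, hsum⟩ := exists_short_zero_sum (Nat.lt_of_succ_le hS)
      exact ⟨T, hTS, hT, hsum⟩⟩).2 S h
  exact hS T hTS hT hsum

theorem exists_short_zero_sum_of_etaConst_le_of_forall_mem_range [Finite H] (φ : H →+ G)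
    {S : Multiset G} (hφ : ∀ g ∈ S, g ∈ Set.range φ) (hS : etaConst H ≤ Multiset.card S) :
    ∃ T ≤ S, T ≠ 0 ∧ Multiset.card T ≤ AddMonoid.exponent H ∧ T.sum = 0 := by
  obtain ⟨S, rfl⟩ := Multiset.exists_map_eq_of_forall_mem_range hφ
  obtain ⟨T, hTS, hT, hcard, hsum⟩ :=
    exists_short_zero_sum_of_etaConst_le (by simpa using hS)
  exact ⟨T.map φ, Multiset.map_le_map hTS, by simpa using hT, by simpa using hcard,
    by rw [← map_multiset_sum, hsum, map_zero]⟩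

theorem IsZeroSumFree.card_lt_davenport_of_forall_mem_range [Finite H] (φ : H →+ G)
    {S : Multiset G} (hS : IsZeroSumFree S) (hφ : ∀ g ∈ S, g ∈ Set.range φ) :
    Multiset.card S < davenport H := by
  obtain ⟨S, rfl⟩ := Multiset.exists_map_eq_of_forall_mem_range hφ
  simpa using (hS.of_map φ).card_lt_davenport

end ZeroSum

section CrossNumber

variable {G : Type*} [AddCommGroup G]

@[simp]
theorem crossNumber_add (S T : Multiset G) :
    crossNumber (S + T) = crossNumber S + crossNumber T := by
  simp [crossNumber]

@[simp]
theorem crossNumber_cons (g : G) (S : Multiset G) :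
    crossNumber (g ::ₘ S) = 1 / (addOrderOf g) + crossNumber S := by
  simp [crossNumber]

theorem crossNumber_of_forall_addOrderOf_eq {T : Multiset G} {d : ℕ}
    (hT : ∀ g ∈ T, addOrderOf g = d) : crossNumber T = Multiset.card T / d := by
  rw [crossNumber, Multiset.map_congr rfl fun g hg => by rw [hT g hg], Multiset.map_const',
    Multiset.sum_replicate, nsmul_eq_mul, mul_one_div]

theorem crossNumber_eq_sum_divisors {N : ℕ} (hN : N ≠ 0) {S : Multiset G}
    (hS : ∀ g ∈ S, addOrderOf g ∣ N) :
    crossNumber S = ∑ d ∈ N.divisors, (Multiset.card (S.filter (addOrderOf · = d)) : ℝ) / d := by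
  induction S using Multiset.induction with
  | empty => simp [crossNumber]
  | cons g S ih =>
    have hg : addOrderOf g ∈ N.divisors :=
      Nat.mem_divisors.mpr ⟨hS g (Multiset.mem_cons_self g S), hN⟩
    rw [crossNumber_cons, ih fun a ha => hS a (Multiset.mem_cons_of_mem ha)]
    simp only [Multiset.filter_cons, Multiset.card_add, apply_ite Multiset.card,
      Multiset.card_singleton, Multiset.card_zero, Nat.cast_add, add_div, Finset.sum_add_distrib]
    simp [ite_div, hg]

end CrossNumber

theorem Multiset.sum_divisors_card_filter_eq {α : Type*} (f : α → ℕ) {d : ℕ} (hd : d ≠ 0)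
    (S : Multiset α) :
    ∑ d' ∈ d.divisors, Multiset.card (S.filter (f · = d')) =
      Multiset.card (S.filter (f · ∣ d)) := by
  induction S using Multiset.induction with
  | empty => simp
  | cons a S ih =>
    simp only [Multiset.filter_cons, Multiset.card_add, apply_ite Multiset.card,
      Multiset.card_singleton, Multiset.card_zero, Finset.sum_add_distrib, ih]
    by_cases ha : f a ∣ d <;> simp [ha, hd]

section Extremal

variable {G : Type*} [AddCommGroup G] [Finite G]

theorem IsZeroSumFree.card_le {S : Multiset G} (hS : IsZeroSumFree S) :
    Multiset.card S ≤ Nat.card G * (AddMonoid.exponent G - 1) := by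
  by_contra! h
  obtain ⟨T, hTS, hT, -, hsum⟩ := exists_short_zero_sum h
  exact hS T hTS hT hsum

variable (G) in
theorem finite_setOf_isZeroSumFree : {S : Multiset G | IsZeroSumFree S}.Finite := by
  have := Fintype.ofFinite G
  set k := Nat.card G * (AddMonoid.exponent G - 1)
  refine (k • (Finset.univ : Finset G).val).powerset.toFinset.finite_toSet.subset fun S hS => ?_
  simp only [Multiset.mem_toFinset, Multiset.mem_powerset,
    Finset.mem_coe, Multiset.le_iff_count, Multiset.count_nsmul, Multiset.count_univ, mul_one]
  exact fun g => (Multiset.count_le_card g S).trans (IsZeroSumFree.card_le hS)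

theorem crossNumber_le_littleCrossNumber {S : Multiset G} (hS : IsZeroSumFree S) :
    crossNumber S ≤ littleCrossNumber G :=
  le_csSup ((finite_setOf_isZeroSumFree G).image crossNumber).bddAbove ⟨S, hS, rfl⟩

variable (G) in
theorem exists_isZeroSumFree_crossNumber_eq_littleCrossNumber :
    ∃ S : Multiset G, IsZeroSumFree S ∧ crossNumber S = littleCrossNumber G :=
  Set.Nonempty.csSup_mem (s := crossNumber '' {S : Multiset G | IsZeroSumFree S})
    ⟨0, 0, fun T hT hT0 => absurd (Multiset.le_zero.mp hT) hT0, by simp [crossNumber]⟩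
    ((finite_setOf_isZeroSumFree G).image crossNumber)

end Extremal

structure IsShortestCrossNumberMaximizer {G : Type*} [AddCommGroup G] (S : Multiset G) :
    Prop where
  isZeroSumFree : IsZeroSumFree S
  crossNumber_eq : crossNumber S = littleCrossNumber G
  card_le : ∀ S' : Multiset G, IsZeroSumFree S' → crossNumber S' = littleCrossNumber G →
    Multiset.card S ≤ Multiset.card S'

section Shortest

variable {G : Type*} [AddCommGroup G] [Finite G]

variable (G) in
theorem exists_isShortestCrossNumberMaximizer :
    ∃ S : Multiset G, IsShortestCrossNumberMaximizer S := by
  obtain ⟨S, ⟨hS, hSk⟩, hmin⟩ := Set.exists_min_image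
    {S : Multiset G | IsZeroSumFree S ∧ crossNumber S = littleCrossNumber G} Multiset.card
    ((finite_setOf_isZeroSumFree G).subset fun _ hS => hS.1)
    (exists_isZeroSumFree_crossNumber_eq_littleCrossNumber G)
  exact ⟨S, ⟨hS, hSk, fun S' h1 h2 => hmin S' ⟨h1, h2⟩⟩⟩

theorem IsShortestCrossNumberMaximizer.one_div_addOrderOf_sum_lt_crossNumber
    {S T : Multiset G} (hS : IsShortestCrossNumberMaximizer S) (hTS : T ≤ S)
    (hT : 2 ≤ Multiset.card T) : 1 / (addOrderOf T.sum : ℝ) < crossNumber T := by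
  by_contra! h
  have hT0 : T ≠ 0 := by rintro rfl; simp at hT
  have hzsf := hS.isZeroSumFree.cons_sum_sub hTS hT0
  have hk : crossNumber (T.sum ::ₘ (S - T)) = littleCrossNumber G := by
    refine le_antisymm (crossNumber_le_littleCrossNumber hzsf) ?_
    calc littleCrossNumber G = crossNumber (S - T) + crossNumber T := by
          rw [← hS.crossNumber_eq, ← crossNumber_add, tsub_add_cancel_of_le hTS]
      _ ≤ crossNumber (T.sum ::ₘ (S - T)) := by rw [crossNumber_cons]; linarith
  have hcard := hS.card_le _ hzsf hk
  rw [Multiset.card_cons, Multiset.card_sub hTS] at hcard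
  have := Multiset.card_le_card hTS
  omega

end Shortest

theorem ZMod.nsmul_eq_zero_of_dvd {u m : ℕ} (h : u ∣ m) (x : ZMod u) : m • x = 0 := by
  rw [nsmul_eq_mul, (ZMod.natCast_eq_zero_iff m u).mpr h, zero_mul]

theorem ZMod.exists_addMonoidHom_forall_nsmul_eq_zero_mem_range {u n : ℕ} (hn : n ≠ 0)
    (hun : u ∣ n) : ∃ φ : ZMod u →+ ZMod n, ∀ x : ZMod n, u • x = 0 → x ∈ Set.range φ := by
  obtain ⟨k, rfl⟩ := hun
  have : NeZero (u * k) := ⟨hn⟩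
  let φ : ZMod u →+ ZMod (u * k) := ZMod.lift u ⟨zmultiplesHom _ (k : ZMod (u * k)), by
    simp [← Nat.cast_mul]⟩
  refine ⟨φ, fun x hx => ?_⟩
  obtain ⟨m, hm⟩ : k ∣ x.val := by
    refine (Nat.mul_dvd_mul_iff_left (Nat.pos_of_ne_zero (left_ne_zero_of_mul hn))).mp ?_
    rw [← ZMod.natCast_eq_zero_iff, Nat.cast_mul, ← nsmul_eq_mul, ZMod.natCast_zmod_val, hx]
  refine ⟨(m : ℤ), ?_⟩
  rw [← ZMod.natCast_zmod_val x, hm, ZMod.lift_coe]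
  simp [mul_comm]

theorem exists_pi_zmod_addMonoidHom_forall_nsmul_eq_zero_mem_range {ι : Type*} {u n : ι → ℕ}
    (hn : ∀ i, n i ≠ 0) (hun : ∀ i, u i ∣ n i) :
    ∃ χ : (∀ i, ZMod (u i)) →+ (∀ i, ZMod (n i)),
      ∀ x : ∀ i, ZMod (n i), (∀ i, u i • x i = 0) → x ∈ Set.range χ := by
  choose φ hφ using fun i => ZMod.exists_addMonoidHom_forall_nsmul_eq_zero_mem_range (hn i) (hun i)
  refine ⟨AddMonoidHom.piMap φ, fun x hx => ?_⟩
  choose y hy using fun i => hφ i (x i) (hx i)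
  exact ⟨y, funext hy⟩

theorem AddMonoid.exponent_pi_zmod_dvd {ι : Type*} {u : ι → ℕ} {m : ℕ} (h : ∀ i, u i ∣ m) :
    AddMonoid.exponent (∀ i, ZMod (u i)) ∣ m :=
  AddMonoid.exponent_dvd_of_forall_nsmul_eq_zero fun x =>
    funext fun i => ZMod.nsmul_eq_zero_of_dvd (h i) (x i)

section Upsilon

variable {n d' d : ℕ}

theorem upsilon_pos (hd' : d' ≠ 0) : 0 < upsilon n d' d := by
  have hA : 0 < Nat.gcd d' n := Nat.gcd_pos_of_pos_left _ (Nat.pos_of_ne_zero hd')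
  exact Nat.div_pos (Nat.le_of_dvd hA (Nat.gcd_dvd_left _ _)) (Nat.gcd_pos_of_pos_left _ hA)

theorem upsilon_dvd_gcd : upsilon n d' d ∣ Nat.gcd d' n :=
  Nat.div_dvd_of_dvd (Nat.gcd_dvd_left _ _)

theorem gcd_mul_lcm_div_lcm (hn : n ≠ 0) (hd' : d' ≠ 0) (hdd : d' ∣ d) :
    Nat.gcd d n * (Nat.lcm d n / Nat.lcm d' n) = Nat.gcd d' n * (d / d') := by
  have hLL : Nat.lcm d' n ∣ Nat.lcm d n := Nat.lcm_dvd_lcm_of_dvd_left n hdd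
  refine Nat.eq_of_mul_eq_mul_right (Nat.pos_of_ne_zero (Nat.lcm_ne_zero hd' hn)) ?_
  calc Nat.gcd d n * (Nat.lcm d n / Nat.lcm d' n) * Nat.lcm d' n
      = Nat.gcd d n * Nat.lcm d n := by rw [mul_assoc, Nat.div_mul_cancel hLL]
    _ = d / d' * (d' * n) := by rw [Nat.gcd_mul_lcm, ← mul_assoc, Nat.div_mul_cancel hdd]
    _ = Nat.gcd d' n * (d / d') * Nat.lcm d' n := by rw [mul_right_comm, Nat.gcd_mul_lcm, mul_comm]

/-- Multiply by `gcd A B`, where `upsilon n d' d = A / gcd A B`: the right side becomes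
`A * (d / d') = gcd d n * B`. -/
theorem gcd_dvd_upsilon_mul_div (hn : n ≠ 0) (hd' : d' ≠ 0) (hdd : d' ∣ d) :
    Nat.gcd d n ∣ upsilon n d' d * (d / d') := by
  set A := Nat.gcd d' n
  set B := Nat.lcm d n / Nat.lcm d' n
  have hg : 0 < Nat.gcd A B :=
    Nat.gcd_pos_of_pos_left _ (Nat.gcd_pos_of_pos_left _ (Nat.pos_of_ne_zero hd'))
  rw [← Nat.mul_dvd_mul_iff_right hg]
  calc Nat.gcd d n * Nat.gcd A B ∣ Nat.gcd d n * B :=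
        Nat.mul_dvd_mul_left _ (Nat.gcd_dvd_right _ _)
    _ = A * (d / d') := gcd_mul_lcm_div_lcm hn hd' hdd
    _ = upsilon n d' d * (d / d') * Nat.gcd A B := by
        rw [upsilon, mul_right_comm, Nat.div_mul_cancel (Nat.gcd_dvd_left _ _)]

end Upsilon

theorem upsilon_nsmul_apply_div_nsmul_eq_zero {ι : Type*} {n : ι → ℕ} (hn : ∀ i, n i ≠ 0)
    {d' d : ℕ} (hd' : d' ≠ 0) (hdd : d' ∣ d) {g : ∀ i, ZMod (n i)} (hg : addOrderOf g ∣ d)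
    (i : ι) : upsilon (n i) d' d • ((d / d') • g) i = 0 := by
  rw [Pi.smul_apply, smul_smul, ← addOrderOf_dvd_iff_nsmul_eq_zero]
  refine (Nat.dvd_gcd ?_ ?_).trans (gcd_dvd_upsilon_mul_div (hn i) hd' hdd)
  · exact addOrderOf_dvd_iff_nsmul_eq_zero.mpr
      (congrFun (addOrderOf_dvd_iff_nsmul_eq_zero.mp hg) i)
  · exact addOrderOf_dvd_iff_nsmul_eq_zero.mpr (ZMod.nsmul_eq_zero_of_dvd dvd_rfl _)

section PiZMod

variable {ι : Type*} [Fintype ι] {n : ι → ℕ} [∀ i, NeZero (n i)]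

theorem IsZeroSumFree.card_filter_addOrderOf_dvd_lt_davenport {S : Multiset (∀ i, ZMod (n i))}
    (hS : IsZeroSumFree S) {d : ℕ} (hd : d ≠ 0) :
    Multiset.card (S.filter (addOrderOf · ∣ d)) < davenport (∀ i, ZMod (upsilon (n i) d d)) := by
  have (i : ι) : NeZero (upsilon (n i) d d) := ⟨(upsilon_pos hd).ne'⟩
  obtain ⟨χ, hχ⟩ := exists_pi_zmod_addMonoidHom_forall_nsmul_eq_zero_mem_range
    (fun i => NeZero.ne (n i)) fun i => upsilon_dvd_gcd.trans (Nat.gcd_dvd_right _ _)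
  refine (hS.mono (Multiset.filter_le _ S)).card_lt_davenport_of_forall_mem_range χ
    fun g hg => hχ g fun i => ?_
  simpa [Nat.div_self (Nat.pos_of_ne_zero hd)] using upsilon_nsmul_apply_div_nsmul_eq_zero
    (fun i => NeZero.ne (n i)) hd dvd_rfl (Multiset.mem_filter.mp hg).2 i

theorem IsShortestCrossNumberMaximizer.card_filter_addOrderOf_eq_lt_etaConst
    {S : Multiset (∀ i, ZMod (n i))} (hS : IsShortestCrossNumberMaximizer S) {d' d : ℕ}
    (hd : d ≠ 0) (hdd : d' ∣ d) (hd' : 1 < d') :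
    Multiset.card (S.filter (addOrderOf · = d)) < etaConst (∀ i, ZMod (upsilon (n i) d' d)) := by
  have hd'0 : d' ≠ 0 := by omega
  have (i : ι) : NeZero (upsilon (n i) d' d) := ⟨(upsilon_pos hd'0).ne'⟩
  set e := d / d'
  have hde : d' * e = d := Nat.mul_div_cancel' hdd
  have he : 0 < e := Nat.pos_of_ne_zero fun h => hd (by rw [← hde, h, mul_zero])
  obtain ⟨χ, hχ⟩ := exists_pi_zmod_addMonoidHom_forall_nsmul_eq_zero_mem_range
    (fun i => NeZero.ne (n i)) fun i => upsilon_dvd_gcd.trans (Nat.gcd_dvd_right _ _)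
  by_contra! h
  obtain ⟨T', hT'S, hT'0, hT'card, hT'sum⟩ := exists_short_zero_sum_of_etaConst_le_of_forall_mem_range
    χ (S := (S.filter (addOrderOf · = d)).map (e • ·)) (by
      simp only [Multiset.mem_map, Multiset.mem_filter]
      rintro _ ⟨g, ⟨-, hg⟩, rfl⟩
      exact hχ _ (upsilon_nsmul_apply_div_nsmul_eq_zero (fun i => NeZero.ne (n i)) hd'0 hdd
        hg.dvd))
    (by simpa using h)
  obtain ⟨T, hTS, rfl⟩ := Multiset.exists_le_map_eq_of_le_map hT'S
  have hord (g) (hg : g ∈ T) : addOrderOf g = d :=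
    (Multiset.mem_filter.mp (Multiset.mem_of_le hTS hg)).2
  have hcard : Multiset.card T ≤ d' := by
    simpa using hT'card.trans (Nat.le_of_dvd (by omega) (AddMonoid.exponent_pi_zmod_dvd
      fun i => upsilon_dvd_gcd.trans (Nat.gcd_dvd_left _ _)))
  have hsum : addOrderOf T.sum ∣ e :=
    addOrderOf_dvd_iff_nsmul_eq_zero.mpr (by rwa [Multiset.smul_sum])
  have hT1 : 1 ≤ Multiset.card T := Multiset.card_pos.mpr (by simpa using hT'0)
  rcases hT1.eq_or_lt with hT1 | hT2
  · obtain ⟨g, rfl⟩ := Multiset.card_eq_one.mp hT1.symm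
    have hde' : d ∣ e := by simpa [hord g (Multiset.mem_singleton_self g)] using hsum
    have := Nat.le_of_dvd he hde'
    nlinarith
  · have hlt := hS.one_div_addOrderOf_sum_lt_crossNumber (hTS.trans (Multiset.filter_le _ S)) hT2
    have hle : Multiset.card T * addOrderOf T.sum ≤ d :=
      hde ▸ Nat.mul_le_mul hcard (Nat.le_of_dvd he hsum)
    rw [crossNumber_of_forall_addOrderOf_eq hord,
      div_lt_div_iff₀ (by exact_mod_cast addOrderOf_pos T.sum) (by positivity), one_mul] at hlt
    exact absurd hlt (not_lt.mpr (by exact_mod_cast hle))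

end PiZMod

theorem stmt1 (r : ℕ) (hr : 0 < r) (n : Fin r → ℕ)
    (hn : ∀ i, 1 < n i) (hdvd : ∀ i j : Fin r, i ≤ j → n i ∣ n j)
    (N : ℕ) (hN : N = n ⟨r - 1, by omega⟩) :
    ∃ x : ℕ → ℕ,
      (∀ d ∈ N.divisors, ∀ d' ∈ d.divisors, 1 < d' →
        x d ≤ etaConst (∀ i : Fin r, ZMod (upsilon (n i) d' d)) - 1) ∧
      (∀ d ∈ N.divisors,
        ∑ d' ∈ d.divisors, x d' ≤ davenport (∀ i : Fin r, ZMod (upsilon (n i) d d)) - 1) ∧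
      littleCrossNumber (∀ i : Fin r, ZMod (n i)) ≤ ∑ d ∈ N.divisors, (x d : ℝ) / d := by
  have (i : Fin r) : NeZero (n i) := ⟨by have := hn i; omega⟩
  have hN0 : N ≠ 0 := hN ▸ NeZero.ne _
  have hexp : AddMonoid.exponent (∀ i : Fin r, ZMod (n i)) ∣ N :=
    AddMonoid.exponent_pi_zmod_dvd fun i => hN ▸ hdvd i _ (Fin.le_def.mpr (Nat.le_sub_one_of_lt i.isLt))
  obtain ⟨S, hS⟩ := exists_isShortestCrossNumberMaximizer (∀ i : Fin r, ZMod (n i))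
  refine ⟨fun d => Multiset.card (S.filter (addOrderOf · = d)), ?_, ?_, ?_⟩
  · intro d hd d' hd' hd'1
    dsimp only
    have := hS.card_filter_addOrderOf_eq_lt_etaConst (Nat.pos_of_mem_divisors hd).ne'
      (Nat.dvd_of_mem_divisors hd') hd'1
    omega
  · intro d hd
    have := hS.isZeroSumFree.card_filter_addOrderOf_dvd_lt_davenport (Nat.pos_of_mem_divisors hd).ne'
    rw [Multiset.sum_divisors_card_filter_eq _ (Nat.pos_of_mem_divisors hd).ne']
    omega
  · rw [← hS.crossNumber_eq, crossNumber_eq_sum_divisors hN0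
      fun g _ => (AddMonoid.addOrder_dvd_exponent g).trans hexp]
end

section
/- Let r ≥ 1 and let n_1, ..., n_r be integers with 1 < n_1 | n_2 | ... | n_r, let G = C_{n_1} ⊕ ... ⊕ C_{n_r}, and let d', d be positive integers with d' | d and d | n_r. Then D_{(d',d)}(G) = D(C_{υ_1(d',d)} ⊕ ... ⊕ C_{υ_r(d',d)}) and η_{(d',d)}(G) = η(C_{υ_1(d',d)} ⊕ ... ⊕ C_{υ_r(d',d)}). -/
/-!
The `d`-torsion of `G = ⊕ C_{n_i}` is `G_d = ⊕ (n_i / gcd(d, n_i)) C_{n_i}`, and reducing the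
coefficient modulo `υ_i` maps it onto `⊕ C_{υ_i}` with kernel exactly `G_d ∩ G_{d/d'}`, because
`υ_i = gcd(d, n_i) / gcd(d/d', n_i)`. A subsequence of a sequence over `G_d` therefore has its
sum in `G_{d/d'}` iff its image has sum zero, and since sequences lift along a surjection with
their subsequences, both invariants of `G` relative to `(d', d)` are the absolute invariants of
`⊕ C_{υ_i}`, whose exponent is `d'`.
-/

open scoped BigOperators

attribute [local instance] Classical.propDecidable

/-- `D_{(d',d)}(G)`: the smallest `t ≥ 1` such that every sequence over `G_d` of length
at least `t` has a nonempty sub-multiset with sum in `G_{d/d'}`. -/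
noncomputable def davenportRel (G : Type*) [AddCommGroup G] (d' d : ℕ) : ℕ :=
  sInf {t | 1 ≤ t ∧ ∀ S : Multiset G, (∀ g ∈ S, d • g = 0) → t ≤ Multiset.card S →
    ∃ T, T ≤ S ∧ T ≠ 0 ∧ (d / d') • T.sum = 0}

/-- `η_{(d',d)}(G)`: as `D_{(d',d)}(G)` but with the sub-multiset of length at most `d'`. -/
noncomputable def etaRel (G : Type*) [AddCommGroup G] (d' d : ℕ) : ℕ :=
  sInf {t | 1 ≤ t ∧ ∀ S : Multiset G, (∀ g ∈ S, d • g = 0) → t ≤ Multiset.card S →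
    ∃ T, T ≤ S ∧ T ≠ 0 ∧ Multiset.card T ≤ d' ∧ (d / d') • T.sum = 0}


namespace Multiset

variable {α β : Type*}

theorem exists_le_map_eq_of_le_map_s2 {f : α → β} {S : Multiset α} {T : Multiset β}
    (h : T ≤ S.map f) : ∃ U ≤ S, U.map f = T := by
  induction S, T using Quotient.inductionOn₂ with
  | h l₁ l₂ =>
    obtain ⟨l, hperm, hsub⟩ := h
    obtain ⟨l', hl', rfl⟩ := List.sublist_map_iff.mp hsub
    exact ⟨l', hl'.subperm, Quot.sound hperm⟩

theorem exists_map_eq_of_forall_mem_range_s2 {f : α → β} {S : Multiset β}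
    (h : ∀ x ∈ S, x ∈ Set.range f) : ∃ U : Multiset α, U.map f = S := by
  induction S using Multiset.induction_on with
  | empty => exact ⟨0, rfl⟩
  | cons b S ih =>
    obtain ⟨a, rfl⟩ := h _ (mem_cons_self _ _)
    obtain ⟨U, rfl⟩ := ih fun x hx ↦ h x (mem_cons_of_mem hx)
    exact ⟨a ::ₘ U, map_cons _ _ _⟩

def HasSubsum {M : Type*} [AddCommMonoid M] (P : ℕ → Prop) (Q : M → Prop) (S : Multiset M) :
    Prop :=
  ∃ T, T ≤ S ∧ T ≠ 0 ∧ P (card T) ∧ Q T.sum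

theorem hasSubsum_map_iff {L M : Type*} [AddCommMonoid L] [AddCommMonoid M] (φ : L →+ M)
    (P : ℕ → Prop) (Q : M → Prop) (S : Multiset L) :
    (S.map φ).HasSubsum P Q ↔ S.HasSubsum P (Q ∘ φ) := by
  constructor
  · rintro ⟨T, hTS, hT0, hP, hQ⟩
    obtain ⟨U, hUS, rfl⟩ := exists_le_map_eq_of_le_map_s2 hTS
    refine ⟨U, hUS, by simpa using hT0, by simpa using hP, ?_⟩
    simpa [map_multiset_sum] using hQ
  · rintro ⟨U, hUS, hU0, hP, hQ⟩
    refine ⟨U.map φ, map_le_map hUS, by simpa using hU0, by simpa using hP, ?_⟩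
    simpa [map_multiset_sum] using hQ

end Multiset

section Transfer

variable {G K L : Type*} [AddCommGroup G] [AddCommGroup K] [AddCommGroup L]
  {ψ : L →+ G} {π : L →+ K} {d d' m : ℕ}

/-- Here `ψ` parametrizes `G_d` and `π` identifies `K` with `G_d / (G_d ∩ G_m)`. -/
theorem forall_hasSubsum_iff_of_surjective (hψ : ∀ g : G, d • g = 0 ↔ g ∈ Set.range ψ)
    (hπ : Function.Surjective π) (hker : ∀ x, π x = 0 ↔ m • ψ x = 0) (P : ℕ → Prop) (t : ℕ) :
    (∀ S : Multiset G, (∀ g ∈ S, d • g = 0) → t ≤ Multiset.card S →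
      S.HasSubsum P (m • · = 0)) ↔
    (∀ S : Multiset K, t ≤ Multiset.card S → S.HasSubsum P (· = 0)) := by
  have hQ : ((· = 0) ∘ π) = ((m • · = 0) ∘ ψ) := funext fun x ↦ propext (hker x)
  constructor
  · intro h S hS
    obtain ⟨U, rfl⟩ := Multiset.map_surjective_of_surjective hπ S
    rw [Multiset.card_map] at hS
    have := h (U.map ψ) (by simp [hψ]) (by rwa [Multiset.card_map])
    rwa [Multiset.hasSubsum_map_iff, ← hQ, ← Multiset.hasSubsum_map_iff] at this
  · intro h S hSd hS
    obtain ⟨U, rfl⟩ := Multiset.exists_map_eq_of_forall_mem_range_s2 fun g hg ↦ (hψ g).1 (hSd g hg)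
    rw [Multiset.card_map] at hS
    have := h (U.map π) (by rwa [Multiset.card_map])
    rwa [Multiset.hasSubsum_map_iff, hQ, ← Multiset.hasSubsum_map_iff] at this

theorem davenportRel_eq_davenport_of_surjective (hψ : ∀ g : G, d • g = 0 ↔ g ∈ Set.range ψ)
    (hπ : Function.Surjective π) (hker : ∀ x, π x = 0 ↔ (d / d') • ψ x = 0) :
    davenportRel G d' d = davenport K := by
  unfold davenportRel davenport
  congr 1
  ext t
  refine and_congr_right fun _ ↦ ?_
  simpa [Multiset.HasSubsum] using forall_hasSubsum_iff_of_surjective hψ hπ hker (fun _ ↦ True) t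

theorem etaRel_eq_etaConst_of_surjective (hψ : ∀ g : G, d • g = 0 ↔ g ∈ Set.range ψ)
    (hπ : Function.Surjective π) (hker : ∀ x, π x = 0 ↔ (d / d') • ψ x = 0)
    (hexp : AddMonoid.exponent K = d') :
    etaRel G d' d = etaConst K := by
  unfold etaRel etaConst
  rw [hexp]
  congr 1
  ext t
  exact and_congr_right fun _ ↦ forall_hasSubsum_iff_of_surjective hψ hπ hker (· ≤ d') t

end Transfer

theorem Nat.dvd_mul_iff_div_gcd_dvd {a b c : ℕ} (ha : 0 < a) : a ∣ b * c ↔ a / a.gcd b ∣ c := by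
  have hg : 0 < a.gcd b := Nat.gcd_pos_of_pos_left b ha
  have hab : a / a.gcd b * a.gcd b ∣ b / a.gcd b * c * a.gcd b ↔ a / a.gcd b ∣ b / a.gcd b * c :=
    Nat.mul_dvd_mul_iff_right hg
  rw [Nat.div_mul_cancel (Nat.gcd_dvd_left a b), mul_right_comm,
    Nat.div_mul_cancel (Nat.gcd_dvd_right a b)] at hab
  rw [hab, (Nat.coprime_div_gcd_div_gcd hg).dvd_mul_left]

section Upsilon

variable {N d' d : ℕ}

theorem upsilon_mul_gcd (hN : 0 < N) (hd' : 0 < d') (m : ℕ) :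
    upsilon N d' (d' * m) * m.gcd N = (d' * m).gcd N := by
  unfold upsilon
  set A := d'.gcd N
  set B := (d' * m).lcm N / d'.lcm N
  have hL : d'.lcm N ∣ (d' * m).lcm N :=
    Nat.lcm_dvd ((dvd_mul_right d' m).trans (Nat.dvd_lcm_left _ _)) (Nat.dvd_lcm_right _ _)
  -- both sides, multiplied by `lcm d' N`, equal `d' * m * N`
  have hB : B * (d' * m).gcd N = m * A := by
    apply Nat.eq_of_mul_eq_mul_right (Nat.lcm_pos hd' hN)
    calc B * (d' * m).gcd N * d'.lcm N = (d' * m).gcd N * (d' * m).lcm N := by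
          rw [mul_right_comm, Nat.div_mul_cancel hL, mul_comm]
      _ = m * A * d'.lcm N := by rw [Nat.gcd_mul_lcm, mul_assoc m, Nat.gcd_mul_lcm]; ring
  have hgm : ((d' * m).gcd N).gcd m = m.gcd N := by
    rw [Nat.gcd_comm, ← Nat.gcd_assoc, Nat.gcd_eq_left (dvd_mul_left m d')]
  have hAB : A.gcd B * (d' * m).gcd N = A * m.gcd N := by
    rw [← Nat.gcd_mul_right, hB, mul_comm m A, Nat.gcd_mul_left, hgm]
  rw [Nat.div_mul_right_comm (Nat.gcd_dvd_left A B), ← hAB,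
    Nat.mul_div_cancel_left _ (Nat.gcd_pos_of_pos_left _ (Nat.gcd_pos_of_pos_left _ hd'))]

theorem upsilon_eq (hN : 0 < N) (hd' : 0 < d') (hd'd : d' ∣ d) :
    upsilon N d' d = d.gcd N / (d / d').gcd N := by
  obtain ⟨m, rfl⟩ := hd'd
  rw [Nat.mul_div_cancel_left m hd', ← upsilon_mul_gcd hN hd',
    Nat.mul_div_cancel _ (Nat.gcd_pos_of_pos_right _ hN)]

theorem upsilon_dvd_modulus (hN : 0 < N) (hd' : 0 < d') (hd'd : d' ∣ d) : upsilon N d' d ∣ N := by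
  obtain ⟨m, rfl⟩ := hd'd
  exact (Dvd.intro _ (upsilon_mul_gcd hN hd' m)).trans (Nat.gcd_dvd_right _ _)

theorem upsilon_dvd_exponent (hN : 0 < N) (hd' : 0 < d') (hd'd : d' ∣ d) :
    upsilon N d' d ∣ d' := by
  obtain ⟨m, rfl⟩ := hd'd
  refine Nat.dvd_of_mul_dvd_mul_right (Nat.gcd_pos_of_pos_right m hN) ?_
  rw [upsilon_mul_gcd hN hd', ← Nat.gcd_mul_left]
  exact Nat.dvd_gcd (Nat.gcd_dvd_left _ _) ((Nat.gcd_dvd_right _ _).trans (dvd_mul_left N d'))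

theorem upsilon_eq_exponent (hN : 0 < N) (hd' : 0 < d') (hd'd : d' ∣ d) (hdN : d ∣ N) :
    upsilon N d' d = d' := by
  obtain ⟨m, rfl⟩ := hd'd
  have hm : 0 < m := Nat.pos_of_mul_pos_left (Nat.pos_of_dvd_of_pos hdN hN)
  have h := upsilon_mul_gcd hN hd' m
  rw [Nat.gcd_eq_left hdN, Nat.gcd_eq_left ((dvd_mul_left m d').trans hdN)] at h
  exact Nat.eq_of_mul_eq_mul_right hm h

theorem gcd_dvd_mul_iff_upsilon_dvd (hN : 0 < N) (hd' : 0 < d') (hd'd : d' ∣ d) (k : ℕ) :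
    d.gcd N ∣ d / d' * k ↔ upsilon N d' d ∣ k := by
  have he : (d.gcd N).gcd (d / d') = (d / d').gcd N := by
    rw [Nat.gcd_comm, ← Nat.gcd_assoc, Nat.gcd_eq_left (Nat.div_dvd_of_dvd hd'd)]
  rw [Nat.dvd_mul_iff_div_gcd_dvd (Nat.gcd_pos_of_pos_right _ hN), upsilon_eq hN hd' hd'd, he]

end Upsilon

namespace ZMod

variable {N : ℕ} [NeZero N]

theorem nsmul_eq_zero_iff_mem_range_mulLeft (d : ℕ) (x : ZMod N) :
    d • x = 0 ↔ x ∈ Set.range (AddMonoidHom.mulLeft ((N / d.gcd N : ℕ) : ZMod N)) := by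
  simp only [Set.mem_range, AddMonoidHom.coe_mulLeft]
  constructor
  · intro h
    rw [← natCast_zmod_val x, nsmul_eq_mul, ← Nat.cast_mul, natCast_eq_zero_iff,
      Nat.dvd_mul_iff_div_gcd_dvd (NeZero.pos N), Nat.gcd_comm] at h
    obtain ⟨k, hk⟩ := h
    exact ⟨k, by rw [← natCast_zmod_val x, hk, Nat.cast_mul]⟩
  · rintro ⟨y, rfl⟩
    have hdN : N ∣ d * (N / d.gcd N) := by
      conv_lhs => rw [← Nat.mul_div_cancel' (Nat.gcd_dvd_right d N)]
      exact Nat.mul_dvd_mul_right (Nat.gcd_dvd_left d N) _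
    rw [nsmul_eq_mul, ← mul_assoc, ← Nat.cast_mul, (natCast_eq_zero_iff _ N).2 hdN, zero_mul]

theorem castHom_upsilon_eq_zero_iff {d' d : ℕ} (hd' : 0 < d') (hd'd : d' ∣ d) (x : ZMod N) :
    castHom (upsilon_dvd_modulus (NeZero.pos N) hd' hd'd) (ZMod (upsilon N d' d)) x = 0 ↔
      (d / d') • (((N / d.gcd N : ℕ) : ZMod N) * x) = 0 := by
  have hN : 0 < N := NeZero.pos N
  have hq : 0 < N / d.gcd N :=
    Nat.div_pos (Nat.le_of_dvd hN (Nat.gcd_dvd_right d N)) (Nat.gcd_pos_of_pos_right d hN)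
  rw [castHom_apply, cast_eq_val, natCast_eq_zero_iff,
    ← gcd_dvd_mul_iff_upsilon_dvd hN hd' hd'd, ← Nat.mul_dvd_mul_iff_right hq,
    Nat.mul_div_cancel' (Nat.gcd_dvd_right d N)]
  conv_rhs => rw [← natCast_zmod_val x]
  rw [nsmul_eq_mul, ← Nat.cast_mul, ← Nat.cast_mul, natCast_eq_zero_iff, mul_left_comm,
    mul_comm _ (N / d.gcd N)]

end ZMod

section Pi

variable {I : Type*} {G K L : I → Type*} [∀ i, AddCommGroup (G i)] [∀ i, AddCommGroup (K i)]
  [∀ i, AddCommGroup (L i)]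

theorem nsmul_eq_zero_iff_mem_range_piMap {ψ : ∀ i, L i →+ G i} {d : ℕ}
    (h : ∀ i (g : G i), d • g = 0 ↔ g ∈ Set.range (ψ i)) (g : ∀ i, G i) :
    d • g = 0 ↔ g ∈ Set.range (AddMonoidHom.piMap ψ) := by
  simp only [funext_iff, Pi.smul_apply, Pi.zero_apply, h, Set.mem_range,
    AddMonoidHom.piMap_apply]
  exact Classical.skolem

theorem piMap_eq_zero_iff_nsmul_piMap_eq_zero {ψ : ∀ i, L i →+ G i} {π : ∀ i, L i →+ K i}
    {m : ℕ} (h : ∀ i x, π i x = 0 ↔ m • ψ i x = 0) (x : ∀ i, L i) :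
    AddMonoidHom.piMap π x = 0 ↔ m • AddMonoidHom.piMap ψ x = 0 := by
  simp only [funext_iff, Pi.smul_apply, Pi.zero_apply, AddMonoidHom.piMap_apply, h]

end Pi

theorem exponent_pi_zmod_upsilon {I : Type*} [Fintype I] {n : I → ℕ} (hn : ∀ i, 0 < n i)
    {d' d : ℕ} (hd' : 0 < d') (hd'd : d' ∣ d) {i₀ : I} (hdn : d ∣ n i₀) :
    AddMonoid.exponent (∀ i, ZMod (upsilon (n i) d' d)) = d' := by
  rw [AddMonoid.exponent_pi]
  simp only [ZMod.exponent]
  refine Nat.dvd_antisymm (Finset.lcm_dvd fun i _ ↦ upsilon_dvd_exponent (hn i) hd' hd'd) ?_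
  exact (upsilon_eq_exponent (hn i₀) hd' hd'd hdn).symm.dvd.trans
    (Finset.dvd_lcm (Finset.mem_univ i₀))

theorem stmt2 (r : ℕ) (hr : 0 < r) (n : Fin r → ℕ)
    (hn : ∀ i, 1 < n i)
    (d' d : ℕ) (hd' : 0 < d') (hd'd : d' ∣ d) (hdN : d ∣ n ⟨r - 1, by omega⟩) :
    davenportRel (∀ i : Fin r, ZMod (n i)) d' d =
      davenport (∀ i : Fin r, ZMod (upsilon (n i) d' d)) ∧
    etaRel (∀ i : Fin r, ZMod (n i)) d' d =
      etaConst (∀ i : Fin r, ZMod (upsilon (n i) d' d)) := by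
  have hn0 : ∀ i, 0 < n i := fun i ↦ Nat.zero_lt_of_lt (hn i)
  have : ∀ i, NeZero (n i) := fun i ↦ ⟨(hn0 i).ne'⟩
  have hυ : ∀ i, upsilon (n i) d' d ∣ n i := fun i ↦ upsilon_dvd_modulus (hn0 i) hd' hd'd
  set ψ := AddMonoidHom.piMap fun i ↦ AddMonoidHom.mulLeft ((n i / d.gcd (n i) : ℕ) : ZMod (n i))
  set π := AddMonoidHom.piMap fun i ↦
    (ZMod.castHom (hυ i) (ZMod (upsilon (n i) d' d))).toAddMonoidHom
  have hψ : ∀ x, d • x = 0 ↔ x ∈ Set.range ψ :=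
    nsmul_eq_zero_iff_mem_range_piMap fun i ↦ ZMod.nsmul_eq_zero_iff_mem_range_mulLeft d
  have hπ : Function.Surjective π :=
    Function.Surjective.piMap fun i ↦ ZMod.castHom_surjective (hυ i)
  have hker : ∀ x, π x = 0 ↔ (d / d') • ψ x = 0 :=
    piMap_eq_zero_iff_nsmul_piMap_eq_zero fun i ↦
      ZMod.castHom_upsilon_eq_zero_iff (N := n i) hd' hd'd
  exact ⟨davenportRel_eq_davenport_of_surjective hψ hπ hker,
    etaRel_eq_etaConst_of_surjective hψ hπ hker (exponent_pi_zmod_upsilon hn0 hd' hd'd hdN)⟩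
end

section
/- For every integer n ≥ 2 with ω(n) = l, one has β_l ≤ β(n) ≤ α(n) ≤ α_l. -/
open scoped BigOperators

attribute [local instance] Classical.propDecidable

/-- `p_l`, the `l`-th prime number (`p_1 = 2`). -/
noncomputable def nthPrime (l : ℕ) : ℕ := Nat.nth Nat.Prime (l - 1)

/-- `α_1 = 1` and `α_l = 1 + (p_l/(p_l − 1))·α_{l−1}` for `l ≥ 2`. -/
noncomputable def alphaSeq : ℕ → ℝ
  | 0 => 0
  | 1 => 1
  | l + 2 => 1 + ((nthPrime (l + 2) : ℝ) / ((nthPrime (l + 2) : ℝ) - 1)) * alphaSeq (l + 1)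

/-- `β_l = Σ_{i=1}^l (p_i − 1)/p_i`. -/
noncomputable def betaSeq (l : ℕ) : ℝ :=
  ∑ i ∈ Finset.range l, ((nthPrime (i + 1) : ℝ) - 1) / (nthPrime (i + 1))

/-- `γ_l = 3α_l − β_l`. -/
noncomputable def gammaSeq (l : ℕ) : ℝ := 3 * alphaSeq l - betaSeq l

/-! Write `n = m * q ^ a` with `q` the largest prime factor of `n`. A divisor `e * q ^ b` with
`1 < e ∣ m` has the same smallest prime factor as `e`, so
`α(n) = α(q ^ a) + α(m) * Σ_{b ≤ a} q⁻ᵇ ≤ 1 + q / (q - 1) * α(m)`.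
As `q` is at least the `ω(n)`-th prime and `x ↦ x / (x - 1)` decreases, induction on `ω(n)`
against the recursion for `α_l` gives `α(n) ≤ α_l`. Similarly the `i`-th smallest prime factor
of `n` is at least `p_i`, which gives `β_l ≤ β(n)`; and `β(n) ≤ α(n)` because `α(n)` contains the
terms `(p - 1) / p` of its prime divisors `d = p`, and only nonnegative terms otherwise. -/

open Finset

lemma alphaSeq_succ (l : ℕ) :
    alphaSeq (l + 1) = 1 + (nthPrime (l + 1) : ℝ) / ((nthPrime (l + 1) : ℝ) - 1) * alphaSeq l := by
  rcases l with _ | l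
  · simp [alphaSeq]
  · rfl

lemma nthPrime_card_succ_le {s : Finset ℕ} {a : ℕ} (hs : ∀ p ∈ s, p.Prime) (ha : a.Prime)
    (hlt : ∀ p ∈ s, p < a) : nthPrime (#s + 1) ≤ a := by
  have hcount : #s ≤ Nat.count Nat.Prime a := by
    rw [Nat.count_eq_card_filter_range]
    exact card_le_card fun p hp => mem_filter.2 ⟨mem_range.2 (hlt p hp), hs p hp⟩
  calc nthPrime (#s + 1) ≤ Nat.nth Nat.Prime (Nat.count Nat.Prime a) :=
        (Nat.nth_le_nth Nat.infinite_setOfPred_prime).2 hcount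
    _ = a := Nat.nth_count ha

lemma div_sub_one_le_div_sub_one {x y : ℝ} (hx : 1 < x) (hxy : x ≤ y) :
    y / (y - 1) ≤ x / (x - 1) := by
  rw [div_le_div_iff₀ (by linarith) (by linarith)]
  nlinarith

lemma sub_one_div_le_sub_one_div {x y : ℝ} (hx : 0 < x) (hxy : x ≤ y) :
    (x - 1) / x ≤ (y - 1) / y := by
  rw [div_le_div_iff₀ hx (by linarith)]
  nlinarith

lemma betaSeq_card_le_sum {s : Finset ℕ} (hs : ∀ p ∈ s, p.Prime) :
    betaSeq #s ≤ ∑ p ∈ s, ((p : ℝ) - 1) / p := by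
  induction s using Finset.induction_on_max with
  | empty => simp [betaSeq]
  | insert a s hlt ih =>
    have ha : a.Prime := hs a (mem_insert_self a s)
    have hs' : ∀ p ∈ s, p.Prime := fun p hp => hs p (mem_insert_of_mem hp)
    have has : a ∉ s := fun h => (hlt a h).false
    have hle : (nthPrime (#s + 1) : ℝ) ≤ a := by exact_mod_cast nthPrime_card_succ_le hs' ha hlt
    have hpos : (0 : ℝ) < nthPrime (#s + 1) := by exact_mod_cast (Nat.prime_nth_prime _).pos
    have ih' := ih hs'
    rw [betaSeq] at ih' ⊢
    rw [card_insert_of_notMem has, sum_insert has, sum_range_succ]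
    linarith [sub_one_div_le_sub_one_div hpos hle]

lemma betaFn_eq_sum_minFac (n : ℕ) :
    betaFn n = ∑ p ∈ n.primeFactors, ((p.minFac : ℝ) - 1) / p :=
  sum_congr rfl fun p hp => by rw [(Nat.prime_of_mem_primeFactors hp).minFac_eq]

lemma alphaTerm_nonneg (d : ℕ) : 0 ≤ ((d.minFac : ℝ) - 1) / d := by
  have : (1 : ℝ) ≤ d.minFac := by exact_mod_cast d.minFac_pos
  exact div_nonneg (by linarith) d.cast_nonneg

lemma alphaFn_nonneg (n : ℕ) : 0 ≤ alphaFn n := sum_nonneg fun d _ => alphaTerm_nonneg d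

lemma betaFn_le_alphaFn (n : ℕ) : betaFn n ≤ alphaFn n := by
  rw [betaFn_eq_sum_minFac]
  refine sum_le_sum_of_subset_of_nonneg (fun p hp => ?_) fun d _ _ => ?_
  · exact Nat.mem_divisors.2 ⟨Nat.dvd_of_mem_primeFactors hp, (Nat.mem_primeFactors.1 hp).2.2⟩
  · exact alphaTerm_nonneg d

lemma minFac_mul_prime_pow {e q : ℕ} (b : ℕ) (he : e ≠ 1) (hq : q.Prime) (hle : e.minFac ≤ q) :
    (e * q ^ b).minFac = e.minFac := by
  have hne : e * q ^ b ≠ 1 := fun h => he (Nat.eq_one_of_mul_eq_one_right h)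
  have hr := Nat.minFac_prime hne
  refine le_antisymm (Nat.minFac_le_of_dvd (Nat.minFac_prime he).two_le
    (dvd_mul_of_dvd_left e.minFac_dvd _)) ?_
  rcases (Nat.Prime.dvd_mul hr).1 (Nat.minFac_dvd (e * q ^ b)) with hdvd | hdvd
  · exact Nat.minFac_le_of_dvd hr.two_le hdvd
  · rwa [(Nat.prime_dvd_prime_iff_eq hr hq).1 (hr.dvd_of_dvd_pow hdvd)]

lemma alphaFn_prime_pow {q : ℕ} (hq : q.Prime) (a : ℕ) :
    alphaFn (q ^ a) = 1 - 1 / (q : ℝ) ^ a := by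
  have hq0 : (q : ℝ) ≠ 0 := by exact_mod_cast hq.ne_zero
  induction a with
  | zero => simp [alphaFn]
  | succ a ih =>
    rw [alphaFn, Nat.sum_divisors_prime_pow hq] at ih ⊢
    rw [sum_range_succ, ih, (hq.pow_minFac a.succ_ne_zero)]
    field_simp
    push_cast
    ring

lemma alphaFn_mul_prime_pow_le {m q : ℕ} (a : ℕ) (hm : m ≠ 0) (hq : q.Prime)
    (hlt : ∀ p ∈ m.primeFactors, p < q) :
    alphaFn (m * q ^ a) ≤ 1 + q / (q - 1) * alphaFn m := by
  set f : ℕ → ℝ := fun d => ((d.minFac : ℝ) - 1) / d with hf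
  have hq1 : (1 : ℝ) < q := by exact_mod_cast hq.one_lt
  have hcop : m.Coprime (q ^ a) :=
    (Nat.Coprime.symm ((Nat.Prime.coprime_iff_not_dvd hq).2 fun h =>
      (hlt q (Nat.mem_primeFactors.2 ⟨hq, h, hm⟩)).false)).pow_right a
  have hsplit : alphaFn (m * q ^ a) =
      ∑ e ∈ m.divisors, ∑ b ∈ range (a + 1), f (e * q ^ b) := by
    rw [alphaFn, Nat.divisors_mul, mul_def, sum_image hcop.mul_injOn_divisors, sum_product]
    exact sum_congr rfl fun e _ => Nat.sum_divisors_prime_pow hq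
  have hterm : ∀ e ∈ m.divisors.erase 1, ∀ b, f (e * q ^ b) = f e * (1 / q) ^ b := by
    intro e he b
    obtain ⟨he1, hem⟩ := mem_erase.1 he
    have hle : e.minFac ≤ q := (hlt _ (Nat.mem_primeFactors.2 ⟨Nat.minFac_prime he1,
      e.minFac_dvd.trans (Nat.dvd_of_mem_divisors hem), hm⟩)).le
    simp only [hf, minFac_mul_prime_pow b he1 hq hle]
    push_cast
    ring
  have hgeom : ∑ b ∈ range (a + 1), (1 / (q : ℝ)) ^ b ≤ q / (q - 1) := by
    calc ∑ b ∈ range (a + 1), (1 / (q : ℝ)) ^ b ≤ (1 / (q : ℝ)) ^ 0 / (1 - 1 / q) :=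
          range_eq_Ico (a + 1) ▸
            geom_sum_Ico_le_of_lt_one (by positivity) ((div_lt_one (by linarith)).2 hq1)
      _ = q / (q - 1) := by field_simp
  have hprime : ∑ b ∈ range (a + 1), f (1 * q ^ b) ≤ 1 := by
    simp only [one_mul]
    rw [← Nat.sum_divisors_prime_pow hq, ← alphaFn, alphaFn_prime_pow hq]
    linarith [show (0 : ℝ) ≤ 1 / (q : ℝ) ^ a by positivity]
  have hrest : ∑ e ∈ m.divisors.erase 1, ∑ b ∈ range (a + 1), f (e * q ^ b) =
      alphaFn m * ∑ b ∈ range (a + 1), (1 / (q : ℝ)) ^ b := by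
    rw [alphaFn, ← sum_erase _ (show f 1 = 0 by simp [hf]), sum_mul]
    exact sum_congr rfl fun e he => by rw [mul_sum]; exact sum_congr rfl fun b _ => hterm e he b
  rw [hsplit, ← add_sum_erase _ _ (Nat.one_mem_divisors.2 hm), hrest]
  have := mul_le_mul_of_nonneg_left hgeom (alphaFn_nonneg m)
  linarith

lemma alphaFn_le_alphaSeq (n : ℕ) : alphaFn n ≤ alphaSeq #n.primeFactors := by
  induction h : #n.primeFactors generalizing n with
  | zero =>
    rcases Nat.primeFactors_eq_empty.1 (card_eq_zero.1 h) with rfl | rfl <;>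
      simp [alphaFn, alphaSeq]
  | succ l ih =>
    have hne : n.primeFactors.Nonempty := card_pos.1 (by omega)
    set q := n.primeFactors.max' hne
    have hqmem : q ∈ n.primeFactors := max'_mem _ hne
    have hq : q.Prime := Nat.prime_of_mem_primeFactors hqmem
    have hn : n ≠ 0 := (Nat.mem_primeFactors.1 hqmem).2.2
    set m := ordCompl[q] n
    have hm : m.primeFactors = n.primeFactors.erase q := by
      rw [← Nat.support_factorization, Nat.factorization_ordCompl, Finsupp.support_erase,
        Nat.support_factorization]
    have hlt : ∀ p ∈ m.primeFactors, p < q := fun p hp => by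
      rw [hm] at hp
      exact n.primeFactors.lt_max'_of_mem_erase_max' hne hp
    have hcard : #m.primeFactors = l := by rw [hm, card_erase_of_mem hqmem, h]; rfl
    have hpl : nthPrime (l + 1) ≤ q := hcard ▸ nthPrime_card_succ_le
      (fun p hp => Nat.prime_of_mem_primeFactors hp) hq hlt
    have hpl1 : (1 : ℝ) < nthPrime (l + 1) := by exact_mod_cast (Nat.prime_nth_prime l).one_lt
    calc alphaFn n = alphaFn (m * q ^ n.factorization q) := by
          rw [mul_comm, Nat.ordProj_mul_ordCompl_eq_self]
      _ ≤ 1 + q / (q - 1) * alphaFn m :=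
          alphaFn_mul_prime_pow_le _ (Nat.ordCompl_pos q hn).ne' hq hlt
      _ ≤ 1 + (nthPrime (l + 1) : ℝ) / ((nthPrime (l + 1) : ℝ) - 1) * alphaSeq l := by
          gcongr 1 + ?_ * ?_
          · exact alphaFn_nonneg m
          · exact div_sub_one_le_div_sub_one hpl1 (by exact_mod_cast hpl)
          · exact ih m hcard
      _ = alphaSeq (l + 1) := (alphaSeq_succ l).symm

theorem stmt9_general (n l : ℕ) (hl : n.primeFactors.card = l) :
    betaSeq l ≤ betaFn n ∧ betaFn n ≤ alphaFn n ∧ alphaFn n ≤ alphaSeq l := by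
  subst hl
  exact ⟨betaSeq_card_le_sum fun p hp => Nat.prime_of_mem_primeFactors hp,
    betaFn_le_alphaFn n, alphaFn_le_alphaSeq n⟩

theorem stmt9 (n l : ℕ) (hn : 2 ≤ n) (hl : n.primeFactors.card = l) :
    betaSeq l ≤ betaFn n ∧ betaFn n ≤ alphaFn n ∧ alphaFn n ≤ alphaSeq l :=
  stmt9_general n l hl
end

section
/- The sequences (α_l/l)_{l ≥ 1} and (β_l/l)_{l ≥ 1} both converge to 1 as l tends to infinity. -/
open scoped BigOperators

/-! Both sequences have increments tending to `1`, so `α_l / l` and `β_l / l` tend to `1` by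
Cesàro averaging. The increment of `β` is `1 - 1/p_l`. The increment of `α` is
`1 + α_{l-1}/(p_l - 1)`; since `p_l ≥ 2l - 1` gives `α_l ≤ 2l`, the excess is `O(l / p_l)`, which
tends to `0` because the primes have density zero (Chebyshev's bound `π(x) = O(x / log x)`). -/

open Filter Topology

theorem tendsto_div_natCast_of_tendsto_succ_sub {u : ℕ → ℝ} {c : ℝ}
    (h : Tendsto (fun n => u (n + 1) - u n) atTop (𝓝 c)) :
    Tendsto (fun n => u n / n) atTop (𝓝 c) := by
  have hmean : Tendsto (fun n : ℕ => (u n - u 0) / n) atTop (𝓝 c) := by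
    refine h.cesaro.congr fun n => ?_
    rw [Finset.sum_range_sub, inv_mul_eq_div]
  have hinit : Tendsto (fun n : ℕ => u 0 / n) atTop (𝓝 0) :=
    tendsto_const_nhds.div_atTop tendsto_natCast_atTop_atTop
  simpa [sub_div] using hmean.add hinit

theorem Nat.tendsto_primeCounting_div_self :
    Tendsto (fun n : ℕ => (Nat.primeCounting n : ℝ) / n) atTop (𝓝 0) := by
  have hbound : ∀ᶠ n : ℕ in atTop,
      (Nat.primeCounting n : ℝ) / n ≤ (Real.log 4 + 1) / Real.log n := by
    filter_upwards [tendsto_natCast_atTop_atTop.eventually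
      (Chebyshev.eventually_primeCounting_le one_pos), eventually_gt_atTop 0] with n hπ hn
    rw [Nat.floor_natCast] at hπ
    calc (Nat.primeCounting n : ℝ) / n ≤ (Real.log 4 + 1) * n / Real.log n / n := by gcongr
      _ = (Real.log 4 + 1) / Real.log n := by field_simp
  refine tendsto_of_tendsto_of_tendsto_of_le_of_le' tendsto_const_nhds ?_
    (Eventually.of_forall fun n => by positivity) hbound
  exact tendsto_const_nhds.div_atTop (Real.tendsto_log_atTop.comp tendsto_natCast_atTop_atTop)

theorem Nat.tendsto_div_nth_prime :
    Tendsto (fun k : ℕ => (k : ℝ) / Nat.nth Nat.Prime k) atTop (𝓝 0) := by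
  have hnth : Tendsto (Nat.nth Nat.Prime) atTop atTop :=
    (Nat.nth_strictMono Nat.infinite_setOfPred_prime).tendsto_atTop
  refine tendsto_of_tendsto_of_tendsto_of_le_of_le tendsto_const_nhds
    (Nat.tendsto_primeCounting_div_self.comp hnth) (fun k => by positivity) fun k => ?_
  have hk : k ≤ Nat.primeCounting (Nat.nth Nat.Prime k) := by
    conv_lhs => rw [← Nat.primeCounting'_nth_eq k]
    exact Nat.monotone_primeCounting' (Nat.le_succ _)
  simp only [Function.comp_apply]
  gcongr

theorem Nat.two_mul_add_one_le_nth_prime {k : ℕ} (hk : k ≠ 0) :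
    2 * k + 1 ≤ Nat.nth Nat.Prime k := by
  induction k with
  | zero => contradiction
  | succ k ih =>
    rcases Nat.eq_zero_or_pos k with rfl | hk
    · simp [Nat.nth_prime_one_eq_three]
    · have hlt : Nat.nth Nat.Prime k < Nat.nth Nat.Prime (k + 1) :=
        Nat.nth_strictMono Nat.infinite_setOfPred_prime (by omega)
      have hodd := (Nat.prime_nth_prime k).eq_two_or_odd
      have hodd' := (Nat.prime_nth_prime (k + 1)).eq_two_or_odd
      have := ih hk.ne'
      omega

theorem nthPrime_succ (k : ℕ) : nthPrime (k + 1) = Nat.nth Nat.Prime k := rfl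

theorem alphaSeq_succ_succ (l : ℕ) :
    alphaSeq (l + 2) = 1 + (Nat.nth Nat.Prime (l + 1) / (Nat.nth Nat.Prime (l + 1) - 1 : ℝ)) *
      alphaSeq (l + 1) := rfl

theorem Nat.cast_nth_prime_sub_one_pos (k : ℕ) : (0 : ℝ) < Nat.nth Nat.Prime k - 1 := by
  have : (2 : ℝ) ≤ Nat.nth Nat.Prime k := by exact_mod_cast (Nat.prime_nth_prime k).two_le
  linarith

theorem alphaSeq_succ_succ_sub (l : ℕ) :
    alphaSeq (l + 2) - alphaSeq (l + 1) =
      1 + alphaSeq (l + 1) / (Nat.nth Nat.Prime (l + 1) - 1 : ℝ) := by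
  have hp := (Nat.cast_nth_prime_sub_one_pos (l + 1)).ne'
  rw [alphaSeq_succ_succ]
  field_simp
  ring

theorem alphaSeq_nonneg (l : ℕ) : 0 ≤ alphaSeq l := by
  induction l with
  | zero => simp [alphaSeq]
  | succ l ih =>
    rcases l with _ | l
    · norm_num [alphaSeq]
    · have := div_nonneg ih (Nat.cast_nth_prime_sub_one_pos (l + 1)).le
      linarith [alphaSeq_succ_succ_sub l]

theorem alphaSeq_le (l : ℕ) : alphaSeq l ≤ 2 * l := by
  induction l with
  | zero => simp [alphaSeq]
  | succ l ih =>
    rcases l with _ | l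
    · norm_num [alphaSeq]
    · have hp : (2 * (l + 1) + 1 : ℝ) ≤ Nat.nth Nat.Prime (l + 1) := by
        exact_mod_cast Nat.two_mul_add_one_le_nth_prime l.succ_ne_zero
      push_cast at ih ⊢
      have hfrac : alphaSeq (l + 1) / (Nat.nth Nat.Prime (l + 1) - 1 : ℝ) ≤ 1 := by
        rw [div_le_one (by linarith)]; linarith
      linarith [alphaSeq_succ_succ_sub l]

theorem tendsto_alphaSeq_succ_sub :
    Tendsto (fun l => alphaSeq (l + 1) - alphaSeq l) atTop (𝓝 1) := by
  rw [← tendsto_add_atTop_iff_nat 1]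
  -- the `4` comes from `α_{l+1} ≤ 2(l+1)` and `p - 1 ≥ p / 2`
  have hupper : Tendsto (fun l : ℕ => 1 + 4 * (((l + 1 : ℕ) : ℝ) / Nat.nth Nat.Prime (l + 1)))
      atTop (𝓝 1) := by
    simpa using tendsto_const_nhds.add
      ((Nat.tendsto_div_nth_prime.comp (tendsto_add_atTop_nat 1)).const_mul 4)
  refine tendsto_of_tendsto_of_tendsto_of_le_of_le tendsto_const_nhds hupper (fun l => ?_)
    fun l => ?_ <;> simp only [alphaSeq_succ_succ_sub]
  · have := div_nonneg (alphaSeq_nonneg (l + 1)) (Nat.cast_nth_prime_sub_one_pos (l + 1)).le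
    linarith
  · have hp : (2 : ℝ) ≤ Nat.nth Nat.Prime (l + 1) := by
      exact_mod_cast (Nat.prime_nth_prime (l + 1)).two_le
    have hα := alphaSeq_le (l + 1)
    push_cast at hα ⊢
    rw [add_le_add_iff_left, mul_div_assoc', div_le_div_iff₀ (by linarith) (by linarith)]
    nlinarith [alphaSeq_nonneg (l + 1)]

theorem tendsto_betaSeq_succ_sub :
    Tendsto (fun l => betaSeq (l + 1) - betaSeq l) atTop (𝓝 1) := by
  have hnth : Tendsto (fun k : ℕ => (Nat.nth Nat.Prime k : ℝ)) atTop atTop :=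
    tendsto_natCast_atTop_atTop.comp
      (Nat.nth_strictMono Nat.infinite_setOfPred_prime).tendsto_atTop
  have hlim : Tendsto (fun k => 1 - (Nat.nth Nat.Prime k : ℝ)⁻¹) atTop (𝓝 1) := by
    simpa using tendsto_const_nhds.sub (tendsto_inv_atTop_zero.comp hnth)
  refine hlim.congr fun k => ?_
  have hp : (Nat.nth Nat.Prime k : ℝ) ≠ 0 := by exact_mod_cast (Nat.prime_nth_prime k).ne_zero
  rw [betaSeq, betaSeq, Finset.sum_range_succ, add_sub_cancel_left, nthPrime_succ]
  field_simp

theorem stmt12 :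
    Filter.Tendsto (fun l : ℕ => alphaSeq l / l) Filter.atTop (nhds 1) ∧
    Filter.Tendsto (fun l : ℕ => betaSeq l / l) Filter.atTop (nhds 1) :=
  ⟨tendsto_div_natCast_of_tendsto_succ_sub tendsto_alphaSeq_succ_sub,
    tendsto_div_natCast_of_tendsto_succ_sub tendsto_betaSeq_succ_sub⟩
end

section
/- Fix an integer l ≥ 1. For every real ε > 0 there exists N such that every integer n ≥ 2 with ω(n) = l and P^-(n) ≥ N satisfies |α(n) − l| < ε and |β(n) − l| < ε. -/
open scoped BigOperators

attribute [local instance] Classical.propDecidable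

/-!
Write `T = ∑_{p ∣ n} 1/p`, so that `β(n) = ω(n) - T` and `α(n) = β(n) + R`, where `R` is the sum of
`(P⁻(d) - 1)/d` over the composite divisors `d` of `n`. If every prime factor is at least `N`,
then `T ≤ ω(n)/N`. Writing a composite `d` as `P⁻(d) · m` with `1 < m ∣ n` bounds its term by
`1/m`, and `d ↦ (P⁻(d), m)` is injective, so `R ≤ ω(n) · ∑_{1 < m ∣ n} 1/m`. The divisor sum is
an Euler product, `∑_{m ∣ n} 1/m ≤ ∏_{p ∣ n} (1 - 1/p)⁻¹ ≤ (1 - 1/N)^{-ω(n)}`, so both errors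
tend to `0` as `N → ∞` with `ω(n) = l` fixed.
-/

open Finset Filter Topology

theorem Finset.sum_le_sum_of_injOn {ι κ M : Type*} [AddCommMonoid M] [PartialOrder M]
    [IsOrderedAddMonoid M] {s : Finset ι} {t : Finset κ} {f : ι → M} {g : κ → M} (e : ι → κ)
    (he : Set.InjOn e s) (hst : Set.MapsTo e s t) (hg : ∀ j ∈ t, 0 ≤ g j)
    (hfg : ∀ i ∈ s, f i ≤ g (e i)) : ∑ i ∈ s, f i ≤ ∑ j ∈ t, g j := by
  classical
  calc ∑ i ∈ s, f i ≤ ∑ i ∈ s, g (e i) := sum_le_sum hfg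
    _ = ∑ j ∈ s.image e, g j := (sum_image he).symm
    _ ≤ ∑ j ∈ t, g j :=
      sum_le_sum_of_subset_of_nonneg (image_subset_iff.mpr hst) fun j hj _ => hg j hj

namespace Nat

theorem sum_inv_divisors_eq_prod {n : ℕ} (hn : n ≠ 0) :
    ∑ d ∈ n.divisors, (d : ℝ)⁻¹ =
      ∏ p ∈ n.primeFactors, ∑ k ∈ range (n.factorization p + 1), ((p : ℝ)⁻¹) ^ k := by
  let inv : ArithmeticFunction ℝ := ⟨fun d => (d : ℝ)⁻¹, by simp⟩
  have hinv : inv.IsMultiplicative :=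
    ⟨by simp [inv], fun {m n} _ => by simp [inv, mul_comm]⟩
  have key := (hinv.mul ArithmeticFunction.isMultiplicative_zeta.natCast).multiplicative_factorization
    _ hn
  rw [ArithmeticFunction.coe_mul_zeta_apply] at key
  change ∑ d ∈ n.divisors, inv d = _
  rw [key, Finsupp.prod, support_factorization]
  refine prod_congr rfl fun p hp => ?_
  rw [ArithmeticFunction.coe_mul_zeta_apply, sum_divisors_prime_pow (prime_of_mem_primeFactors hp)]
  simp [inv]

theorem sum_inv_divisors_le {n N : ℕ} (hn : n ≠ 0) (hN : 2 ≤ N)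
    (hp : ∀ p ∈ n.primeFactors, N ≤ p) :
    ∑ d ∈ n.divisors, (d : ℝ)⁻¹ ≤ ((1 - (N : ℝ)⁻¹)⁻¹) ^ n.primeFactors.card := by
  rw [sum_inv_divisors_eq_prod hn, ← prod_const]
  refine prod_le_prod (fun p _ => sum_nonneg fun k _ => by positivity) fun p hpn => ?_
  have hN0 : (0 : ℝ) < N := by positivity
  have hNp : (N : ℝ) ≤ p := mod_cast hp p hpn
  have hN1 : (N : ℝ)⁻¹ < 1 := inv_lt_one_of_one_lt₀ (by exact_mod_cast hN)
  have hp1 : (p : ℝ)⁻¹ < 1 := lt_of_le_of_lt (by gcongr) hN1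
  calc ∑ k ∈ range (n.factorization p + 1), ((p : ℝ)⁻¹) ^ k
      ≤ ((p : ℝ)⁻¹) ^ 0 / (1 - (p : ℝ)⁻¹) := by
        rw [range_eq_Ico]
        exact geom_sum_Ico_le_of_lt_one (by positivity) hp1
    _ ≤ (1 - (N : ℝ)⁻¹)⁻¹ := by
        rw [pow_zero, one_div]
        gcongr

theorem minFac_sub_one_div_le (d : ℕ) :
    ((d.minFac : ℝ) - 1) / d ≤ ((d / d.minFac : ℕ) : ℝ)⁻¹ := by
  have hd : (d : ℝ) = d.minFac * (d / d.minFac : ℕ) :=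
    mod_cast (Nat.mul_div_cancel' d.minFac_dvd).symm
  have hp : (0 : ℝ) < d.minFac := mod_cast d.minFac_pos
  have hm : (0 : ℝ) ≤ (d / d.minFac : ℕ) := by positivity
  rw [hd]
  generalize ((d / d.minFac : ℕ) : ℝ) = m at hm ⊢
  generalize (d.minFac : ℝ) = p at hp ⊢
  calc (p - 1) / (p * m) = (p - 1) / p * m⁻¹ := by ring
    _ ≤ 1 * m⁻¹ := by gcongr; rw [div_le_one hp]; linarith
    _ = m⁻¹ := one_mul _

theorem sum_inv_primeFactors_le {n N : ℕ} (hN : 0 < N) (hp : ∀ p ∈ n.primeFactors, N ≤ p) :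
    ∑ p ∈ n.primeFactors, (p : ℝ)⁻¹ ≤ n.primeFactors.card * (N : ℝ)⁻¹ := by
  rw [← nsmul_eq_mul, ← sum_const]
  refine sum_le_sum fun p hpn => ?_
  have := hp p hpn
  gcongr

theorem sum_nonprime_divisors_le (n : ℕ) :
    ∑ d ∈ (n.divisors.erase 1).filter (¬ ·.Prime), ((d.minFac : ℝ) - 1) / d ≤
      n.primeFactors.card * ∑ m ∈ n.divisors.erase 1, (m : ℝ)⁻¹ := by
  rw [← nsmul_eq_mul, ← sum_const, ← sum_product']
  refine sum_le_sum_of_injOn (fun d => (d.minFac, d / d.minFac)) ?_ ?_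
    (fun _ _ => by positivity) fun d _ => minFac_sub_one_div_le d
  · intro d _ d' _ h
    obtain ⟨h₁, h₂⟩ := Prod.mk.inj h
    rw [← Nat.mul_div_cancel' d.minFac_dvd, ← Nat.mul_div_cancel' d'.minFac_dvd, h₂, h₁]
  · intro d hd
    simp only [mem_coe, mem_filter, mem_erase, Nat.mem_divisors] at hd
    obtain ⟨⟨hd1, hdn, hn⟩, hdp⟩ := hd
    have hq : d / d.minFac ≠ 1 := fun h => hdp <| by
      rw [← Nat.mul_div_cancel' d.minFac_dvd, h, mul_one]
      exact Nat.minFac_prime hd1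
    simp only [mem_coe, mem_product, mem_erase, Nat.mem_divisors, Nat.mem_primeFactors]
    exact ⟨⟨Nat.minFac_prime hd1, d.minFac_dvd.trans hdn, hn⟩, hq,
      (Nat.div_dvd_of_dvd d.minFac_dvd).trans hdn, hn⟩

end Nat

theorem betaFn_eq_card_sub (n : ℕ) :
    betaFn n = n.primeFactors.card - ∑ p ∈ n.primeFactors, (p : ℝ)⁻¹ := by
  rw [betaFn, ← nsmul_one, ← sum_const, ← sum_sub_distrib]
  refine sum_congr rfl fun p hp => ?_
  have : (p : ℝ) ≠ 0 := mod_cast (Nat.prime_of_mem_primeFactors hp).ne_zero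
  field_simp

theorem alphaFn_eq_betaFn_add (n : ℕ) :
    alphaFn n = betaFn n +
      ∑ d ∈ (n.divisors.erase 1).filter (¬ ·.Prime), ((d.minFac : ℝ) - 1) / d := by
  have hprimes : (n.divisors.erase 1).filter Nat.Prime = n.primeFactors := by
    ext p
    simp only [mem_filter, mem_erase, Nat.mem_divisors, Nat.mem_primeFactors]
    constructor
    · rintro ⟨⟨-, h⟩, hp⟩; exact ⟨hp, h⟩
    · rintro ⟨hp, h⟩; exact ⟨⟨hp.ne_one, h⟩, hp⟩
  rw [alphaFn, ← sum_erase n.divisors (by simp : ((Nat.minFac 1 : ℝ) - 1) / (1 : ℕ) = 0),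
    ← sum_filter_add_sum_filter_not _ Nat.Prime, hprimes, betaFn]
  congr 1
  refine sum_congr rfl fun p hp => ?_
  rw [(Nat.prime_of_mem_primeFactors hp).minFac_eq]

noncomputable def errorBound (l N : ℕ) : ℝ :=
  l * (N : ℝ)⁻¹ + l * ((1 - (N : ℝ)⁻¹)⁻¹ ^ l - 1)

theorem tendsto_errorBound (l : ℕ) : Tendsto (errorBound l) atTop (𝓝 0) := by
  have hcont : ContinuousAt (fun x : ℝ => l * x + l * ((1 - x)⁻¹ ^ l - 1)) 0 := by
    fun_prop (disch := norm_num)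
  unfold errorBound
  simpa [Function.comp_def] using hcont.tendsto.comp tendsto_inv_atTop_nhds_zero_nat

theorem stmt13_general (l : ℕ) :
    ∀ ε : ℝ, 0 < ε → ∃ N : ℕ, ∀ n : ℕ, 2 ≤ n → n.primeFactors.card = l →
      N ≤ n.minFac → |alphaFn n - l| < ε ∧ |betaFn n - l| < ε := by
  intro ε hε
  obtain ⟨N, hNε, hN⟩ :=
    (((tendsto_errorBound l).eventually (gt_mem_nhds hε)).and (eventually_ge_atTop 2)).exists
  refine ⟨N, fun n hn hl hNn => ?_⟩
  have hp : ∀ p ∈ n.primeFactors, N ≤ p := fun p hp =>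
    hNn.trans (Nat.minFac_le_of_dvd (Nat.prime_of_mem_primeFactors hp).two_le
      (Nat.dvd_of_mem_primeFactors hp))
  set T := ∑ p ∈ n.primeFactors, (p : ℝ)⁻¹
  set R := ∑ d ∈ (n.divisors.erase 1).filter (¬ ·.Prime), ((d.minFac : ℝ) - 1) / d
  have hT0 : 0 ≤ T := sum_nonneg fun _ _ => by positivity
  have hR0 : 0 ≤ R := sum_nonneg fun d _ =>
    div_nonneg (sub_nonneg.mpr (mod_cast d.minFac_pos)) d.cast_nonneg
  have hT : T ≤ l * (N : ℝ)⁻¹ := hl ▸ Nat.sum_inv_primeFactors_le (by omega) hp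
  have hR : R ≤ l * ((1 - (N : ℝ)⁻¹)⁻¹ ^ l - 1) := by
    calc R ≤ l * ∑ m ∈ n.divisors.erase 1, (m : ℝ)⁻¹ := hl ▸ Nat.sum_nonprime_divisors_le n
      _ = l * (∑ m ∈ n.divisors, (m : ℝ)⁻¹ - 1) := by
        rw [sum_erase_eq_sub (Nat.one_mem_divisors.mpr (by omega)), Nat.cast_one, inv_one]
      _ ≤ l * ((1 - (N : ℝ)⁻¹)⁻¹ ^ l - 1) := by
        gcongr
        exact hl ▸ Nat.sum_inv_divisors_le (by omega) hN hp
  rw [errorBound] at hNε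
  rw [alphaFn_eq_betaFn_add, betaFn_eq_card_sub, hl]
  constructor <;> rw [abs_lt] <;> constructor <;> linarith

theorem stmt13 (l : ℕ) (hl : 1 ≤ l) :
    ∀ ε : ℝ, 0 < ε → ∃ N : ℕ, ∀ n : ℕ, 2 ≤ n → n.primeFactors.card = l →
      N ≤ n.minFac → |alphaFn n - l| < ε ∧ |betaFn n - l| < ε :=
  stmt13_general l
end
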